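/- Let G be a group and A a symmetrical partial kG-module algebra. For g ∈ G let ψ_g: A → A be defined by ψ_g(a) = g·(g⁻¹·a). Then ψ_g is an A-bimodule map (ψ_g(axb) = a ψ_g(x) b for all a,x,b ∈ A), ψ_g(A) is a two-sided ideal of A, and if A is idempotent or r(A)=0 or l(A)=0, then ψ_g² = ψ_g. -/

import Mathlib

section PartialGroupPrelude

variable (k : Type) [Field k] (G : Type) [Group G]
variable (A : Type) [NonUnitalRing A] [Module k A] [SMulCommClass k A A] [IsScalarTower k A A]

/-- A symmetrical partial action of the group algebra `kG` on the (possibly nonunital)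
algebra `A`, written out on the grouplike elements of `kG`:
`1 · a = a`, `g · (a (h · b)) = (g · a)(gh · b)` and `g · ((h · b) a) = (gh · b)(g · a)`. -/
structure SymmPartialGAction where
  act : G → A →ₗ[k] A
  one_act : ∀ a : A, act 1 a = a
  act_mul_right : ∀ (g h : G) (a b : A), act g (a * act h b) = act g a * act (g * h) b
  act_mul_left : ∀ (g h : G) (a b : A), act g (act h b * a) = act (g * h) b * act g a

/-- The algebra `A` is idempotent: `A² = A`. -/
def IsIdempotentAlgebra : Prop :=
  ∀ a : A, a ∈ Submodule.span k {x : A | ∃ b c : A, x = b * c}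

/-- `r(A) = 0`: the right annihilator of `A` is trivial. -/
def RAnnTrivial : Prop := ∀ a : A, (∀ b : A, b * a = 0) → a = 0

/-- `l(A) = 0`: the left annihilator of `A` is trivial. -/
def LAnnTrivial : Prop := ∀ b : A, (∀ a : A, b * a = 0) → b = 0

variable {k G A}

/-- `ψ_g(a) = g · (g⁻¹ · a)`. -/
def psiMap (P : SymmPartialGAction k G A) (g : G) : A →ₗ[k] A :=
  (P.act g).comp (P.act g⁻¹)

end PartialGroupPrelude

/-!
`ψ_g` commutes with multiplication from either side, and it fixes every product `a (g · e)`,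
in particular every element of `A ψ_g(A)`. Hence `ψ_g(ψ_g(ax)) = ψ_g(a ψ_g(x)) = a ψ_g(x) = ψ_g(ax)`,
so `ψ_g² = ψ_g` on products. This is all of `A` when `A² = A`; when an annihilator is trivial,
`ψ_g²(x) - ψ_g(x)` is annihilated by `A` because `ψ_g²` and `ψ_g` agree on `Ax` and on `xA`.
-/

section PsiMap

variable {k : Type} [Field k] {G : Type} [Group G] {A : Type} [NonUnitalRing A] [Module k A]
variable (P : SymmPartialGAction k G A) (g : G)

theorem SymmPartialGAction.act_mul (a b : A) :
    P.act g (a * b) = P.act g a * P.act g b := by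
  simpa only [mul_one, P.one_act] using P.act_mul_right g 1 a b

theorem psiMap_mul_left (a x : A) : psiMap P g (a * x) = a * psiMap P g x := by
  simpa only [psiMap, LinearMap.comp_apply, P.act_mul, mul_inv_cancel, P.one_act] using
    P.act_mul_left g g⁻¹ (P.act g⁻¹ x) a

theorem psiMap_mul_right (x b : A) : psiMap P g (x * b) = psiMap P g x * b := by
  simpa only [psiMap, LinearMap.comp_apply, P.act_mul, mul_inv_cancel, P.one_act] using
    P.act_mul_right g g⁻¹ (P.act g⁻¹ x) b

theorem psiMap_mul_act (a e : A) : psiMap P g (a * P.act g e) = a * P.act g e := by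
  have h : P.act g⁻¹ (a * P.act g e) = P.act g⁻¹ a * e := by
    simpa only [inv_mul_cancel, P.one_act] using P.act_mul_right g⁻¹ g a e
  simpa only [psiMap, LinearMap.comp_apply, h, mul_inv_cancel, P.one_act] using
    P.act_mul_left g g⁻¹ e a

theorem psiMap_psiMap_mul (a x : A) :
    psiMap P g (psiMap P g (a * x)) = psiMap P g (a * x) := by
  rw [psiMap_mul_left]
  exact psiMap_mul_act P g a (P.act g⁻¹ x)

theorem psiMap_comp_self_of_isIdempotentAlgebra (hA : IsIdempotentAlgebra k A) :
    (psiMap P g).comp (psiMap P g) = psiMap P g := by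
  ext x
  induction hA x using Submodule.span_induction with
  | mem y hy =>
    obtain ⟨a, b, rfl⟩ := hy
    exact psiMap_psiMap_mul P g a b
  | zero => simp
  | add y z _ _ hy hz => simp_all
  | smul c y _ hy => simp_all

theorem psiMap_comp_self_of_rAnnTrivial (hA : RAnnTrivial A) :
    (psiMap P g).comp (psiMap P g) = psiMap P g := by
  ext x
  refine sub_eq_zero.mp (hA _ fun b => ?_)
  rw [mul_sub, LinearMap.comp_apply, ← psiMap_mul_left, ← psiMap_mul_left, psiMap_psiMap_mul,
    psiMap_mul_left, sub_self]

theorem psiMap_comp_self_of_lAnnTrivial (hA : LAnnTrivial A) :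
    (psiMap P g).comp (psiMap P g) = psiMap P g := by
  ext x
  refine sub_eq_zero.mp (hA _ fun b => ?_)
  rw [sub_mul, LinearMap.comp_apply, ← psiMap_mul_right, ← psiMap_mul_right, psiMap_psiMap_mul,
    psiMap_mul_right, sub_self]

end PsiMap

section Stmt5

variable {k : Type} [Field k] {G : Type} [Group G]
variable {A : Type} [NonUnitalRing A] [Module k A] [SMulCommClass k A A] [IsScalarTower k A A]

/-- For a symmetrical partial `kG`-module algebra `A` and `g ∈ G`, the map
`ψ_g(a) = g · (g⁻¹ · a)` is an `A`-bimodule map, its image is a two-sided ideal of `A`, and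
if `A` is idempotent or `r(A) = 0` or `l(A) = 0` then `ψ_g² = ψ_g`. -/
theorem psi_bimodule_ideal_idempotent (P : SymmPartialGAction k G A) (g : G) :
    (∀ a x b : A, psiMap P g (a * x * b) = a * psiMap P g x * b) ∧
    (∀ (a : A) (x : A),
      a * psiMap P g x ∈ Set.range (psiMap P g) ∧
      psiMap P g x * a ∈ Set.range (psiMap P g)) ∧
    ((IsIdempotentAlgebra k A ∨ RAnnTrivial A ∨ LAnnTrivial A) →
      (psiMap P g).comp (psiMap P g) = psiMap P g) := by
  refine ⟨fun a x b => ?_, fun a x => ⟨⟨a * x, ?_⟩, ⟨x * a, ?_⟩⟩, ?_⟩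
  · rw [psiMap_mul_right, psiMap_mul_left]
  · exact psiMap_mul_left P g a x
  · exact psiMap_mul_right P g x a
  · rintro (hA | hA | hA)
    · exact psiMap_comp_self_of_isIdempotentAlgebra P g hA
    · exact psiMap_comp_self_of_rAnnTrivial P g hA
    · exact psiMap_comp_self_of_lAnnTrivial P g hA

end Stmt5
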